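/- The pair β_n = (1-q) q^{n²-n}/(q;q)_{2n}, with α_{3m-1} = q^{3m²+2m} - q^{3m²-4m+1}, α_{3m} = q^{3m²-2m} - q^{3m²+4m+1}, α_{3m+1} = 0, is a Bailey pair relative to a = q; that is, β_n = ∑_{r=0}^n α_r/((q;q)_{n-r}(q²;q)_{n+r}) for all n ≥ 0. -/

import Mathlib

open Finset

noncomputable def qPoch (a q : ℂ) (n : ℕ) : ℂ := ∏ i ∈ Finset.range n, (1 - a * q ^ i)

noncomputable def qInf (q : ℂ) : ℂ := ∏' i : ℕ, (1 - q ^ (i + 1))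

def zsgn (m : ℤ) : ℤ := if 0 ≤ m then 1 else -1

noncomputable def alphaS6 (q : ℂ) (n : ℕ) : ℂ :=
  if n % 3 = 0 then q ^ (3 * ((n : ℤ) / 3) ^ 2 - 2 * ((n : ℤ) / 3) : ℤ) - q ^ (3 * ((n : ℤ) / 3) ^ 2 + 4 * ((n : ℤ) / 3) + 1 : ℤ)
  else if n % 3 = 1 then 0
  else q ^ (3 * (((n : ℤ) + 1) / 3) ^ 2 + 2 * (((n : ℤ) + 1) / 3) : ℤ) - q ^ (3 * (((n : ℤ) + 1) / 3) ^ 2 - 4 * (((n : ℤ) + 1) / 3) + 1 : ℤ)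

/-!
With `[N, k]_q = qBinom q N k`, the identity `(q²;q)_{n+r} = (q;q)_{n+r+1} / (1 - q)` turns
the claim into `T_n = q^{n²-n} (1 - q^{2n+1})` for `T_n = ∑_r α_r [2n+1, n+r+1]_q`
(`alphaBinomSum`). Both sides satisfy `(1 - q^{2n+1}) T_{n+1} = q^{2n} (1 - q^{2n+3}) T_n`;
for `T_n` this is creative telescoping: the difference `wzDiff n r` of the summands of the two
sides of the recurrence, summed over the blocks `r ∈ {3j+2, 3j+3}` (`α_{3j+1} = 0`),
telescopes to the certificate `wzCert n j`, which vanishes once `3j + 1 > n`.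
-/

section QBinomial

variable {q : ℂ}

lemma one_sub_pow_succ_ne_zero (hq : ¬IsOfFinOrder q) (j : ℕ) : 1 - q ^ (j + 1) ≠ 0 :=
  fun h => hq <| isOfFinOrder_iff_pow_eq_one.2 ⟨j + 1, j.succ_pos, (sub_eq_zero.1 h).symm⟩

lemma qPoch_zero (a : ℂ) : qPoch a q 0 = 1 := prod_range_zero _

lemma qPoch_self_succ (k : ℕ) : qPoch q q (k + 1) = qPoch q q k * (1 - q ^ (k + 1)) := by
  rw [qPoch, qPoch, prod_range_succ, pow_succ']

lemma qPoch_self_ne_zero (hq : ¬IsOfFinOrder q) (k : ℕ) : qPoch q q k ≠ 0 :=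
  prod_ne_zero_iff.2 fun i _ => by rw [← pow_succ']; exact one_sub_pow_succ_ne_zero hq i

lemma one_sub_mul_qPoch_sq (k : ℕ) : (1 - q) * qPoch (q ^ 2) q k = qPoch q q (k + 1) := by
  rw [qPoch, qPoch, prod_range_succ', pow_zero, mul_one, mul_comm]
  exact congrArg (· * _) (prod_congr rfl fun i _ => by ring)

variable (q) in
noncomputable def qBinom (N k : ℕ) : ℂ :=
  if k ≤ N then qPoch q q N / (qPoch q q k * qPoch q q (N - k)) else 0

lemma qBinom_of_lt {N k : ℕ} (h : N < k) : qBinom q N k = 0 := if_neg h.not_ge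

lemma qBinom_self (hq : ¬IsOfFinOrder q) (N : ℕ) : qBinom q N N = 1 := by
  rw [qBinom, if_pos le_rfl, Nat.sub_self, qPoch_zero, mul_one,
    div_self (qPoch_self_ne_zero hq N)]

lemma qBinom_eq_of_add {N k l : ℕ} (h : k + l = N) :
    qBinom q N k = qPoch q q N / (qPoch q q k * qPoch q q l) := by
  rw [qBinom, if_pos (by omega), show N - k = l by omega]

lemma one_sub_pow_mul_qBinom_succ (hq : ¬IsOfFinOrder q) (N k : ℕ) :
    (1 - q ^ (k + 1)) * qBinom q N (k + 1) = (1 - q ^ (N - k)) * qBinom q N k := by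
  rcases lt_or_ge k N with h | h
  · obtain ⟨l, rfl⟩ := Nat.exists_eq_add_of_lt h
    rw [qBinom_eq_of_add (l := l) (by omega), qBinom_eq_of_add (l := l + 1) (by omega),
      show k + l + 1 - k = l + 1 by omega, qPoch_self_succ k, qPoch_self_succ l]
    have := qPoch_self_ne_zero hq k
    have := qPoch_self_ne_zero hq l
    have := one_sub_pow_succ_ne_zero hq k
    have := one_sub_pow_succ_ne_zero hq l
    field_simp
  · rw [qBinom_of_lt (by omega), show N - k = 0 by omega]
    simp

lemma one_sub_pow_mul_qBinom_succ_succ (hq : ¬IsOfFinOrder q) (N k : ℕ) :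
    (1 - q ^ (k + 1)) * qBinom q (N + 1) (k + 1) = (1 - q ^ (N + 1)) * qBinom q N k := by
  rcases le_or_gt k N with h | h
  · obtain ⟨l, rfl⟩ := Nat.exists_eq_add_of_le h
    rw [qBinom_eq_of_add (l := l) (by omega), qBinom_eq_of_add (l := l) (by omega),
      show k + l + 1 = (k + l) + 1 by omega, qPoch_self_succ (k + l), qPoch_self_succ k]
    have := qPoch_self_ne_zero hq k
    have := qPoch_self_ne_zero hq l
    have := one_sub_pow_succ_ne_zero hq k
    field_simp
  · rw [qBinom_of_lt h, qBinom_of_lt (by omega)]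
    simp

lemma qBinom_succ (hq : ¬IsOfFinOrder q) (N k : ℕ) :
    qBinom q N (k + 1) = (1 - q ^ (N - k)) / (1 - q ^ (k + 1)) * qBinom q N k := by
  rw [div_mul_eq_mul_div, eq_div_iff (one_sub_pow_succ_ne_zero hq k), mul_comm,
    one_sub_pow_mul_qBinom_succ hq]

lemma qBinom_succ_succ (hq : ¬IsOfFinOrder q) (N k : ℕ) :
    qBinom q (N + 1) (k + 1) = (1 - q ^ (N + 1)) / (1 - q ^ (k + 1)) * qBinom q N k := by
  rw [div_mul_eq_mul_div, eq_div_iff (one_sub_pow_succ_ne_zero hq k), mul_comm,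
    one_sub_pow_mul_qBinom_succ_succ hq]

end QBinomial

section Alpha

variable (q : ℂ)

lemma alphaS6_zero : alphaS6 q 0 = 1 - q := by
  simp [alphaS6]

lemma alphaS6_three_mul_add_one (m : ℕ) : alphaS6 q (3 * m + 1) = 0 := by
  rw [alphaS6, if_neg (by omega), if_pos (by omega)]

lemma alphaS6_three_mul_add_two (m : ℕ) :
    alphaS6 q (3 * m + 2) = q ^ (3 * m ^ 2 + 8 * m + 5) - q ^ (3 * m ^ 2 + 2 * m) := by
  rw [alphaS6, if_neg (by omega), if_neg (by omega),
    show ((3 * m + 2 : ℕ) : ℤ) + 1 = 3 * ((m : ℤ) + 1) by push_cast; ring,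
    Int.mul_ediv_cancel_left _ three_ne_zero,
    show 3 * ((m : ℤ) + 1) ^ 2 + 2 * ((m : ℤ) + 1) = ((3 * m ^ 2 + 8 * m + 5 : ℕ) : ℤ) by
      push_cast; ring,
    show 3 * ((m : ℤ) + 1) ^ 2 - 4 * ((m : ℤ) + 1) + 1 = ((3 * m ^ 2 + 2 * m : ℕ) : ℤ) by
      push_cast; ring,
    zpow_natCast, zpow_natCast]

lemma alphaS6_three_mul_add_three (m : ℕ) :
    alphaS6 q (3 * m + 3) = q ^ (3 * m ^ 2 + 4 * m + 1) - q ^ (3 * m ^ 2 + 10 * m + 8) := by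
  rw [alphaS6, if_pos (by omega),
    show ((3 * m + 3 : ℕ) : ℤ) = 3 * ((m : ℤ) + 1) by push_cast; ring,
    Int.mul_ediv_cancel_left _ three_ne_zero,
    show 3 * ((m : ℤ) + 1) ^ 2 - 2 * ((m : ℤ) + 1) = ((3 * m ^ 2 + 4 * m + 1 : ℕ) : ℤ) by
      push_cast; ring,
    show 3 * ((m : ℤ) + 1) ^ 2 + 4 * ((m : ℤ) + 1) + 1
        = ((3 * m ^ 2 + 10 * m + 8 : ℕ) : ℤ) by push_cast; ring,
    zpow_natCast, zpow_natCast]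

end Alpha

section Telescoping

variable (q : ℂ)

noncomputable def alphaBinom (n r : ℕ) : ℂ := alphaS6 q r * qBinom q (2 * n + 1) (n + r + 1)

noncomputable def alphaBinomSum (n : ℕ) : ℂ := ∑ r ∈ range (n + 1), alphaBinom q n r

noncomputable def wzDiff (n r : ℕ) : ℂ :=
  (1 - q ^ (2 * n + 1)) * alphaBinom q (n + 1) r
    - q ^ (2 * n) * (1 - q ^ (2 * n + 3)) * alphaBinom q n r

noncomputable def wzCert (n j : ℕ) : ℂ :=
  (1 - q ^ (2 * n + 3)) * (q ^ (3 * j ^ 2 + 2 * j) * (1 - q ^ (2 * j + 1))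
    + q ^ (n + 3 * j ^ 2 + j) * (1 - q ^ (4 * j + 2))) * qBinom q (2 * n + 1) (n + 3 * j + 2)

variable {q}

lemma wzDiff_zero (hq : ¬IsOfFinOrder q) (n : ℕ) : wzDiff q n 0 = wzCert q n 0 := by
  rw [wzDiff, wzCert, alphaBinom, alphaBinom, alphaS6_zero,
    show 2 * (n + 1) + 1 = 2 * n + 1 + 1 + 1 by ring, show n + 1 + 0 + 1 = n + 1 + 1 by ring,
    show n + 3 * 0 + 2 = n + 1 + 1 by ring, qBinom_succ_succ hq, qBinom_succ_succ hq,
    qBinom_succ hq (2 * n + 1) (n + 1), add_zero, qBinom_succ hq (2 * n + 1) n,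
    show 2 * n + 1 - (n + 1) = n by omega, show 2 * n + 1 - n = n + 1 by omega]
  have := one_sub_pow_succ_ne_zero hq (n + 1)
  have := one_sub_pow_succ_ne_zero hq n
  field_simp
  ring

lemma wzDiff_three_mul_add_one (n m : ℕ) : wzDiff q n (3 * m + 1) = 0 := by
  simp [wzDiff, alphaBinom, alphaS6_three_mul_add_one]

lemma wzDiff_add_wzDiff (hq : ¬IsOfFinOrder q) (n m : ℕ) :
    wzDiff q n (3 * m + 2) + wzDiff q n (3 * m + 3) = wzCert q n (m + 1) - wzCert q n m := by
  rw [wzDiff, wzDiff, wzCert, wzCert, alphaBinom, alphaBinom, alphaBinom, alphaBinom,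
    alphaS6_three_mul_add_two, alphaS6_three_mul_add_three,
    show 2 * (n + 1) + 1 = 2 * n + 1 + 1 + 1 by ring,
    show n + 1 + (3 * m + 2) + 1 = n + 3 * m + 2 + 1 + 1 by ring,
    show n + 1 + (3 * m + 3) + 1 = n + 3 * m + 2 + 1 + 1 + 1 by ring,
    show n + 3 * (m + 1) + 2 = n + 3 * m + 2 + 1 + 1 + 1 by ring,
    show n + (3 * m + 2) + 1 = n + 3 * m + 2 + 1 by ring,
    show n + (3 * m + 3) + 1 = n + 3 * m + 2 + 1 + 1 by ring,
    qBinom_succ hq (2 * n + 1 + 1 + 1) (n + 3 * m + 2 + 1 + 1),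
    qBinom_succ_succ hq (2 * n + 1 + 1), qBinom_succ_succ hq (2 * n + 1),
    qBinom_succ hq (2 * n + 1) (n + 3 * m + 2 + 1 + 1),
    qBinom_succ hq (2 * n + 1) (n + 3 * m + 2 + 1), qBinom_succ hq (2 * n + 1) (n + 3 * m + 2)]
  -- Everything is now a multiple of `[2n+1, n+3m+2]_q`, which vanishes for `n < 3m+1`; otherwise
  -- the truncated exponents `a - 1`, `a - 2` force the cases `a ≤ 2` apart.
  obtain h | ⟨a, rfl⟩ : n < 3 * m + 1 ∨ ∃ a, n = 3 * m + 1 + a :=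
    (lt_or_ge n (3 * m + 1)).imp_right Nat.exists_eq_add_of_le
  · rw [qBinom_of_lt (by omega)]
    ring
  rw [show 2 * (3 * m + 1 + a) + 1 - (3 * m + 1 + a + 3 * m + 2) = a by omega,
    show 2 * (3 * m + 1 + a) + 1 + 1 + 1 - (3 * m + 1 + a + 3 * m + 2 + 1 + 1) = a by omega,
    show 2 * (3 * m + 1 + a) + 1 - (3 * m + 1 + a + 3 * m + 2 + 1) = a - 1 by omega,
    show 2 * (3 * m + 1 + a) + 1 - (3 * m + 1 + a + 3 * m + 2 + 1 + 1) = a - 2 by omega]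
  have := one_sub_pow_succ_ne_zero hq (3 * m + 1 + a + 3 * m + 2)
  have := one_sub_pow_succ_ne_zero hq (3 * m + 1 + a + 3 * m + 2 + 1)
  have := one_sub_pow_succ_ne_zero hq (3 * m + 1 + a + 3 * m + 2 + 2)
  obtain _ | _ | _ | a := a
  iterate 3 (norm_num only; field_simp; ring)
  rw [show a + 1 + 1 + 1 - 1 = a + 2 by omega, show a + 1 + 1 + 1 - 2 = a + 1 by omega]
  field_simp
  ring

lemma sum_wzDiff_range (hq : ¬IsOfFinOrder q) (n j : ℕ) :
    ∑ r ∈ range (3 * j + 2), wzDiff q n r = wzCert q n j := by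
  induction j with
  | zero => simp [sum_range_succ, wzDiff_zero hq, wzDiff_three_mul_add_one n 0]
  | succ j ih =>
    rw [show 3 * (j + 1) + 2 = 3 * j + 2 + 1 + 1 + 1 by ring, sum_range_succ, sum_range_succ,
      sum_range_succ, ih, show 3 * j + 2 + 1 + 1 = 3 * (j + 1) + 1 by ring,
      wzDiff_three_mul_add_one]
    linear_combination wzDiff_add_wzDiff hq n j

lemma alphaBinom_of_lt {n r : ℕ} (h : n < r) : alphaBinom q n r = 0 := by
  rw [alphaBinom, qBinom_of_lt (by omega), mul_zero]

lemma sum_alphaBinom_range {n K : ℕ} (h : n < K) :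
    ∑ r ∈ range K, alphaBinom q n r = alphaBinomSum q n :=
  (sum_subset (range_subset_range.2 h) fun r _ hr =>
    alphaBinom_of_lt (by simpa using hr)).symm

lemma alphaBinomSum_succ (hq : ¬IsOfFinOrder q) (n : ℕ) :
    (1 - q ^ (2 * n + 1)) * alphaBinomSum q (n + 1)
      = q ^ (2 * n) * (1 - q ^ (2 * n + 3)) * alphaBinomSum q n := by
  have h := sum_wzDiff_range hq n n
  rw [wzCert, qBinom_of_lt (by omega), mul_zero] at h
  simp only [wzDiff, sum_sub_distrib, ← mul_sum,
    sum_alphaBinom_range (by omega : n + 1 < 3 * n + 2),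
    sum_alphaBinom_range (by omega : n < 3 * n + 2)] at h
  exact sub_eq_zero.1 h

lemma alphaBinomSum_eq (hq : ¬IsOfFinOrder q) (n : ℕ) :
    alphaBinomSum q n = q ^ (n ^ 2 - n) * (1 - q ^ (2 * n + 1)) := by
  induction n with
  | zero => simp [alphaBinomSum, alphaBinom, alphaS6_zero, qBinom_self hq]
  | succ n ih =>
    apply mul_left_cancel₀ (one_sub_pow_succ_ne_zero hq (2 * n))
    have h := Nat.le_self_pow two_ne_zero n
    rw [alphaBinomSum_succ hq, ih, show (n + 1) ^ 2 - (n + 1) = n ^ 2 - n + 2 * n by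
      zify [h, Nat.le_self_pow two_ne_zero (n + 1)]; ring]
    ring

end Telescoping

theorem stmt6 (q : ℂ) (hq : ‖q‖ < 1) (n : ℕ) :
    (1 - q) * q ^ (n ^ 2 - n) / qPoch q q (2 * n)
      = ∑ r ∈ Finset.range (n + 1), alphaS6 q r / (qPoch q q (n - r) * qPoch (q ^ 2) q (n + r)) := by
  have hroot : ¬IsOfFinOrder q := fun h => h.norm_eq_one.not_lt hq
  have hterm : ∀ r ∈ range (n + 1), alphaS6 q r / (qPoch q q (n - r) * qPoch (q ^ 2) q (n + r))
      = alphaBinom q n r * ((1 - q) / qPoch q q (2 * n + 1)) := by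
    intro r hr
    have := qPoch_self_ne_zero hroot (n + r + 1)
    have := qPoch_self_ne_zero hroot (n - r)
    have := qPoch_self_ne_zero hroot (2 * n + 1)
    have : 1 - q ≠ 0 := by simpa using one_sub_pow_succ_ne_zero hroot 0
    rw [alphaBinom, qBinom_eq_of_add (l := n - r) (by have := mem_range.1 hr; omega),
      ← one_sub_mul_qPoch_sq (n + r)]
    field_simp
  rw [sum_congr rfl hterm, ← sum_mul, ← alphaBinomSum, alphaBinomSum_eq hroot, qPoch_self_succ]
  have := qPoch_self_ne_zero hroot (2 * n)
  have := one_sub_pow_succ_ne_zero hroot (2 * n)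
  field_simp
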